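/- Let f : ℝ^n → ℝ be continuous and bounded, let δ > 0 and t > 0, and define the viscous value function u^δ(x,t) = −δ ln( ∫_{ℝ^n} (4πt)^{−n/2} exp(−‖x − y‖²/(4t)) exp(−f(y)/δ) dy ). Then u^δ(·,t) is differentiable on ℝ^n, and its gradient is given by the Gaussian-expectation quotient ∇u^δ(x,t) = (δ/(2t)) · E_{y ∼ N(x, 2t·I)}[(x − y) exp(−f(y)/δ)] / E_{y ∼ N(x, 2t·I)}[exp(−f(y)/δ)], where N(x, 2t·I) denotes the Gaussian measure on ℝ^n with mean x and covariance 2t times the identity. -/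

import Mathlib

open Filter Topology MeasureTheory Real

/-- The viscous value function
`u^δ(x,t) = -δ ln( ∫ (4πt)^{-n/2} exp(-‖x-y‖²/(4t)) exp(-f(y)/δ) dy )`. -/
noncomputable def viscousEnv {n : ℕ} (f : EuclideanSpace ℝ (Fin n) → ℝ) (δ t : ℝ)
    (x : EuclideanSpace ℝ (Fin n)) : ℝ :=
  -δ * Real.log (∫ y : EuclideanSpace ℝ (Fin n),
    (4 * π * t) ^ (-(n : ℝ) / 2) * Real.exp (-‖x - y‖ ^ 2 / (4 * t)) *
      Real.exp (-f y / δ))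

/-- The density of the Gaussian distribution `N(x, 2t·I)` on `ℝ^n`, which coincides with
the heat kernel `Φ_t(x - ·)`. -/
noncomputable def gaussDensity {n : ℕ} (t : ℝ) (x y : EuclideanSpace ℝ (Fin n)) : ℝ :=
  (4 * π * t) ^ (-(n : ℝ) / 2) * Real.exp (-‖x - y‖ ^ 2 / (4 * t))

/-!
Writing the integrand as `exp (-‖z - y‖ ^ 2 / (4 * t)) * g y` with `g = c * exp (-f / δ)` bounded,
positive and measurable, the `z`-derivative of the Gaussian factor is
`-(2 / b) * exp (-‖z - y‖ ^ 2 / b) * ⟪z - y, ·⟫`. Since `s * exp (-s ^ 2 / b)` is dominated by a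
multiple of `exp (-r ^ 2 / (4 * b))` whenever `|s - r| ≤ 1`, this derivative is dominated, uniformly
for `z` in the unit ball around `x`, by an integrable Gaussian in `y`; so the integral may be
differentiated under the integral sign, and the positive integral then passes through `-δ * log`.
-/

theorem mul_exp_neg_sq_div_le {b s r : ℝ} (hb : 0 < b) (hr : 0 ≤ r)
    (hsr : s ≤ r + 1) (hrs : r ≤ s + 1) :
    s * exp (-s ^ 2 / b) ≤ 2 * (1 + 4 * b) * exp (1 / b) * exp (-r ^ 2 / (4 * b)) := by
  have h_exp : -s ^ 2 / b ≤ 1 / b - r ^ 2 / (2 * b) := by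
    have h_sq : r ^ 2 ≤ 2 * s ^ 2 + 2 := by
      nlinarith [sq_nonneg (s - 1), mul_le_mul hrs hrs hr (by linarith : (0:ℝ) ≤ s + 1)]
    have h_diff : -s ^ 2 / b - (1 / b - r ^ 2 / (2 * b)) = (r ^ 2 - 2 * s ^ 2 - 2) / (2 * b) := by
      field_simp
      ring
    rw [← sub_nonpos, h_diff]
    exact div_nonpos_of_nonpos_of_nonneg (by linarith) (by positivity)
  have h_lin : r + 1 ≤ 2 * (1 + 4 * b) * exp (r ^ 2 / (4 * b)) := by
    have h_expand : 2 * (1 + 4 * b) * (1 + r ^ 2 / (4 * b))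
        = 2 + 8 * b + r ^ 2 / (2 * b) + 2 * r ^ 2 := by
      field_simp
      ring
    calc r + 1 ≤ 2 * (1 + 4 * b) * (1 + r ^ 2 / (4 * b)) := by
          rw [h_expand]
          nlinarith [sq_nonneg (r - 1 / 2), div_nonneg (sq_nonneg r) (by positivity : 0 ≤ 2 * b)]
      _ ≤ 2 * (1 + 4 * b) * exp (r ^ 2 / (4 * b)) := by
          gcongr
          linarith [add_one_le_exp (r ^ 2 / (4 * b))]
  calc s * exp (-s ^ 2 / b) ≤ (r + 1) * exp (1 / b - r ^ 2 / (2 * b)) :=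
        mul_le_mul hsr (exp_le_exp.2 h_exp) (exp_pos _).le (by linarith)
    _ ≤ 2 * (1 + 4 * b) * exp (r ^ 2 / (4 * b)) * exp (1 / b - r ^ 2 / (2 * b)) := by gcongr
    _ = 2 * (1 + 4 * b) * exp (1 / b) * exp (-r ^ 2 / (4 * b)) := by
        rw [mul_assoc, ← exp_add, mul_assoc _ (exp _), ← exp_add]
        congr 2
        field_simp
        ring

section InnerProductSpace

variable {V : Type*} [NormedAddCommGroup V] [InnerProductSpace ℝ V]

theorem hasFDerivAt_exp_neg_norm_sub_sq_div_mul (b c : ℝ) (y z : V) :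
    HasFDerivAt (fun w => exp (-‖w - y‖ ^ 2 / b) * c)
      (innerSL ℝ ((-(2 / b) * exp (-‖z - y‖ ^ 2 / b) * c) • (z - y))) z := by
  have h := ((((hasFDerivAt_id z).sub_const y).norm_sq.const_mul (-b⁻¹)).exp).mul_const c
  simp_rw [neg_div, div_eq_inv_mul, ← neg_mul]
  refine h.congr_fderiv (ContinuousLinearMap.ext fun v => ?_)
  simp only [id_eq, neg_mul, map_sub, ContinuousLinearMap.comp_id, neg_smul, smul_neg, neg_apply,
    smul_apply, sub_apply, coe_innerSL_apply, nsmul_eq_mul, Nat.cast_ofNat, smul_eq_mul, map_neg,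
    map_smul, neg_inj]
  ring

theorem HasGradientAt.const_mul [CompleteSpace V] {f : V → ℝ} {f' x : V}
    (hf : HasGradientAt f f' x) (c : ℝ) :
    HasGradientAt (fun z => c * f z) (c • f') x := by
  rw [hasGradientAt_iff_hasFDerivAt] at hf ⊢
  simpa using hf.const_mul c

theorem HasGradientAt.log [CompleteSpace V] {f : V → ℝ} {f' x : V}
    (hf : HasGradientAt f f' x) (hx : f x ≠ 0) :
    HasGradientAt (fun z => Real.log (f z)) ((f x)⁻¹ • f') x := by
  rw [hasGradientAt_iff_hasFDerivAt] at hf ⊢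
  simpa using hf.log hx

variable [FiniteDimensional ℝ V] [MeasurableSpace V] [BorelSpace V]

theorem integrable_exp_neg_norm_sub_sq_div {b : ℝ} (hb : 0 < b) (x : V) :
    Integrable (fun y : V => exp (-‖x - y‖ ^ 2 / b)) := by
  have h0 : Integrable (fun v : V => exp (-‖v‖ ^ 2 / b)) := by
    refine (GaussianFourier.integrable_cexp_neg_mul_sq_norm_add (V := V) (b := (b⁻¹ : ℂ))
      (by simpa using hb) 0 0).re.congr (.of_forall fun v => ?_)
    simp only [← Complex.ofReal_inv, ← Complex.ofReal_neg, ← Complex.ofReal_pow,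
      ← Complex.ofReal_mul, inner_zero_left, Complex.ofReal_zero, mul_zero, add_zero,
      RCLike.re_to_complex, Complex.exp_ofReal_re, exp_eq_exp]
    ring
  exact h0.comp_sub_left x

theorem integrable_exp_neg_norm_sub_sq_div_mul {b : ℝ} (hb : 0 < b) {g : V → ℝ}
    (hg : AEStronglyMeasurable g) {C : ℝ} (hC : ∀ y, |g y| ≤ C) (x : V) :
    Integrable (fun y => exp (-‖x - y‖ ^ 2 / b) * g y) :=
  (integrable_exp_neg_norm_sub_sq_div hb x).mul_bdd hg (.of_forall hC)

theorem integral_exp_neg_norm_sub_sq_div_mul_pos {b : ℝ} (hb : 0 < b) {g : V → ℝ}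
    (hg : AEStronglyMeasurable g) {C : ℝ} (hC : ∀ y, |g y| ≤ C) (hg_pos : ∀ y, 0 < g y)
    (x : V) : 0 < ∫ y, exp (-‖x - y‖ ^ 2 / b) * g y := by
  have hF_pos : ∀ y, 0 < exp (-‖x - y‖ ^ 2 / b) * g y := fun y => by positivity [hg_pos y]
  rw [integral_pos_iff_support_of_nonneg (fun y => (hF_pos y).le)
    (integrable_exp_neg_norm_sub_sq_div_mul hb hg hC x),
    Function.support_eq_univ fun y => (hF_pos y).ne']
  exact isOpen_univ.measure_pos volume Set.univ_nonempty

theorem hasGradientAt_integral_exp_neg_norm_sub_sq_div_mul {b : ℝ} (hb : 0 < b) {g : V → ℝ}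
    (hg : AEStronglyMeasurable g) {C : ℝ} (hC : ∀ y, |g y| ≤ C) (x : V) :
    HasGradientAt (fun z => ∫ y, exp (-‖z - y‖ ^ 2 / b) * g y)
      (-(2 / b) • ∫ y, (exp (-‖x - y‖ ^ 2 / b) * g y) • (x - y)) x := by
  set W : V → V → V := fun z y => (-(2 / b) * exp (-‖z - y‖ ^ 2 / b) * g y) • (z - y)
  have hW_bound : ∀ y, ∀ z ∈ Metric.ball x 1,
      ‖W z y‖ ≤ 2 / b * C * (2 * (1 + 4 * b) * exp (1 / b) * exp (-‖x - y‖ ^ 2 / (4 * b))) := by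
    intro y z hz
    have hzx : ‖z - x‖ < 1 := mem_ball_iff_norm.1 hz
    have h_tail := mul_exp_neg_sq_div_le (s := ‖z - y‖) hb (norm_nonneg (x - y))
      (by linarith [norm_sub_le_norm_sub_add_norm_sub z x y])
      (by linarith [norm_sub_le_norm_sub_add_norm_sub x z y, norm_sub_rev x z])
    calc ‖W z y‖ = 2 / b * |g y| * (‖z - y‖ * exp (-‖z - y‖ ^ 2 / b)) := by
          simp only [W, norm_smul, Real.norm_eq_abs, abs_mul, abs_neg, abs_div, abs_two,
            abs_of_pos hb, abs_exp]
          ring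
      _ ≤ _ := by
          have hC_nonneg : 0 ≤ C := (abs_nonneg _).trans (hC y)
          gcongr
          exact hC y
  have hW_meas : AEStronglyMeasurable (W x) := by fun_prop
  have h_bound_int : Integrable fun y =>
      2 / b * C * (2 * (1 + 4 * b) * exp (1 / b) * exp (-‖x - y‖ ^ 2 / (4 * b))) :=
    ((integrable_exp_neg_norm_sub_sq_div (by positivity) x).const_mul _).const_mul _
  have hW_int : Integrable (W x) :=
    h_bound_int.mono' hW_meas (.of_forall fun y => hW_bound y x (Metric.mem_ball_self one_pos))
  have hF' := hasFDerivAt_integral_of_dominated_of_fderiv_le (F' := fun z y => innerSL ℝ (W z y))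
    (Metric.ball_mem_nhds x one_pos)
    (.of_forall fun z => (integrable_exp_neg_norm_sub_sq_div_mul hb hg hC z).aestronglyMeasurable)
    (integrable_exp_neg_norm_sub_sq_div_mul hb hg hC x)
    ((innerSL ℝ).continuous.comp_aestronglyMeasurable hW_meas)
    (.of_forall fun y z hz => (innerSL_apply_norm ℝ (W z y)).trans_le (hW_bound y z hz))
    h_bound_int
    (.of_forall fun y z _ => hasFDerivAt_exp_neg_norm_sub_sq_div_mul b (g y) y z)
  have h_int_W : ∫ y, W x y = -(2 / b) • ∫ y, (exp (-‖x - y‖ ^ 2 / b) * g y) • (x - y) := by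
    rw [← integral_smul]
    simp only [W, smul_smul, mul_assoc]
  rw [hasGradientAt_iff_hasFDerivAt, ← h_int_W]
  exact hF'.congr_fderiv (ContinuousLinearMap.integral_comp_comm _ hW_int)

end InnerProductSpace

theorem stmt_15 (n : ℕ) (f : EuclideanSpace ℝ (Fin n) → ℝ)
    (hf : Continuous f) (M : ℝ) (hbd : ∀ y, |f y| ≤ M)
    (δ t : ℝ) (hδ : 0 < δ) (ht : 0 < t) :
    ∀ x : EuclideanSpace ℝ (Fin n),
      HasGradientAt (viscousEnv f δ t)
        ((δ / (2 * t) /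
            -- denominator: E_{y ∼ N(x,2tI)}[exp(-f(y)/δ)]
            (∫ y : EuclideanSpace ℝ (Fin n), gaussDensity t x y * Real.exp (-f y / δ))) •
          -- numerator: E_{y ∼ N(x,2tI)}[(x - y) exp(-f(y)/δ)]
          (∫ y : EuclideanSpace ℝ (Fin n),
            (gaussDensity t x y * Real.exp (-f y / δ)) • (x - y)))
        x := by
  intro x
  set c := (4 * π * t) ^ (-(n : ℝ) / 2)
  have hc : 0 < c := rpow_pos_of_pos (by positivity) _
  set g := fun y => c * exp (-f y / δ)
  have hg_bdd : ∀ y, |g y| ≤ c * exp (M / δ) := fun y => by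
    rw [abs_of_pos (by positivity), mul_le_mul_iff_right₀ hc]
    gcongr
    linarith [(abs_le.1 (hbd y)).1]
  have hg_meas : AEStronglyMeasurable g := by fun_prop
  have h_density : ∀ z y,
      gaussDensity t z y * exp (-f y / δ) = exp (-‖z - y‖ ^ 2 / (4 * t)) * g y :=
    fun z y => by simp only [gaussDensity, g]; ring
  have h_env : viscousEnv f δ t =
      fun z => -δ * log (∫ y, gaussDensity t z y * exp (-f y / δ)) := rfl
  have h4t : 0 < 4 * t := by positivity
  have h_pos := integral_exp_neg_norm_sub_sq_div_mul_pos h4t hg_meas hg_bdd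
    (fun y => by positivity) x
  have h_grad := ((hasGradientAt_integral_exp_neg_norm_sub_sq_div_mul h4t hg_meas hg_bdd x).log
    h_pos.ne').const_mul (-δ)
  simp only [h_env, h_density]
  convert h_grad using 1
  rw [smul_smul, smul_smul]
  congr 1
  field_simp
  ring
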